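/- arXiv:2004.06875 — 3 statements merged into one kernel-verified Lean document; each statement's English description precedes it below -/
import Mathlib

section
/- For any integer ℓ ≥ 1 and real ε' ∈ [0,1], define ψ(ℓ, j, ε') = ∑_{i=0}^{ℓ-1-j} C(ℓ,i)·(1-ε')^i·(ε')^{ℓ-i}. Then the mean over j is preserved: (1/ℓ)·∑_{j=0}^{ℓ-1} ψ(ℓ, j, ε') = ε'. -/
/-- Mean preservation of the density-evolution map ψ for a length-ℓ block:
`ψ ℓ j ε' = ∑_{i=0}^{ℓ-1-j} C(ℓ,i) (1-ε')^i ε'^{ℓ-i}` averaged over `j` equals `ε'`. -/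
theorem psi_mean_preserved (ℓ : ℕ) (hℓ : 1 ≤ ℓ) (ε' : ℝ) (h0 : 0 ≤ ε') (h1 : ε' ≤ 1)
    (ψ : ℕ → ℕ → ℝ → ℝ)
    (hψ : ∀ j, ψ ℓ j ε' =
      ∑ i ∈ Finset.range (ℓ - j), (ℓ.choose i : ℝ) * (1 - ε') ^ i * ε' ^ (ℓ - i)) :
    (1 / (ℓ : ℝ)) * ∑ j ∈ Finset.range ℓ, ψ ℓ j ε' = ε' := by
  obtain ⟨m, rfl⟩ : ∃ m, ℓ = m + 1 := ⟨ℓ - 1, (Nat.succ_pred_eq_of_pos hℓ).symm⟩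
  set ℓ := m + 1 with hℓdef
  set f : ℕ → ℝ := fun i => (ℓ.choose i : ℝ) * (1 - ε') ^ i * ε' ^ (ℓ - i) with hf
  have key : ∑ j ∈ Finset.range ℓ, ψ ℓ j ε'
      = ∑ i ∈ Finset.range ℓ, ((ℓ - i : ℕ) : ℝ) * f i := by
    calc ∑ j ∈ Finset.range ℓ, ψ ℓ j ε'
        = ∑ j ∈ Finset.range ℓ, ∑ i ∈ Finset.range ℓ,
            (if i + j < ℓ then f i else 0) := by
          refine Finset.sum_congr rfl fun j hj => ?_
          rw [hψ j, Finset.sum_ite, Finset.sum_const_zero, add_zero]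
          refine Finset.sum_congr ?_ fun _ _ => rfl
          ext i
          simp only [Finset.mem_filter, Finset.mem_range]
          omega
      _ = ∑ i ∈ Finset.range ℓ, ∑ j ∈ Finset.range ℓ,
            (if i + j < ℓ then f i else 0) := Finset.sum_comm
      _ = ∑ i ∈ Finset.range ℓ, ((ℓ - i : ℕ) : ℝ) * f i := by
          refine Finset.sum_congr rfl fun i hi => ?_
          rw [Finset.sum_ite, Finset.sum_const_zero, add_zero, Finset.sum_const,
            nsmul_eq_mul]
          congr 2
          rw [show ℓ - i = (Finset.range (ℓ - i)).card from (Finset.card_range _).symm]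
          congr 1
          ext j
          simp only [Finset.mem_filter, Finset.mem_range]
          omega
  have step2 : ∑ i ∈ Finset.range ℓ, ((ℓ - i : ℕ) : ℝ) * f i = (ℓ : ℝ) * ε' := by
    have : ∑ i ∈ Finset.range ℓ, ((ℓ - i : ℕ) : ℝ) * f i
        = (ℓ : ℝ) * ε' * ∑ i ∈ Finset.range (m + 1),
            (m.choose i : ℝ) * (1 - ε') ^ i * ε' ^ (m - i) := by
      rw [Finset.mul_sum]
      refine Finset.sum_congr rfl fun i hi => ?_
      have him : i ≤ m := by
        have := Finset.mem_range.mp hi; omega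
      have hnat : m.choose i * (m + 1) = (m + 1).choose i * (m + 1 - i) :=
        Nat.choose_mul_succ_eq m i
      have hcast : ((ℓ - i : ℕ) : ℝ) * (ℓ.choose i : ℝ) = (ℓ : ℝ) * (m.choose i : ℝ) := by
        have h' : ((m.choose i * (m + 1) : ℕ) : ℝ) = (((m + 1).choose i * (m + 1 - i) : ℕ) : ℝ) := by
          exact_mod_cast congrArg (Nat.cast (R := ℝ)) hnat
        push_cast [Nat.cast_sub (by omega : i ≤ m + 1)] at h'
        simp only [hℓdef]
        push_cast [Nat.cast_sub (by omega : i ≤ m + 1)]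
        linarith [h']
      have hpow : ε' ^ (ℓ - i) = ε' * ε' ^ (m - i) := by
        have : ℓ - i = (m - i) + 1 := by omega
        rw [this, pow_succ]
        ring
      rw [hf]
      simp only []
      rw [hpow]
      linear_combination ((1 - ε') ^ i * ε' * ε' ^ (m - i)) * hcast
    rw [this]
    have hbin : ∑ i ∈ Finset.range (m + 1),
        (m.choose i : ℝ) * (1 - ε') ^ i * ε' ^ (m - i) = 1 := by
      have h := add_pow (1 - ε') ε' m
      simp only [sub_add_cancel, one_pow] at h
      refine Eq.trans ?_ h.symm
      refine Finset.sum_congr rfl fun i hi => ?_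
      ring
    rw [hbin, mul_one]
  rw [key, step2]
  have hℓne : (ℓ : ℝ) ≠ 0 := by positivity
  field_simp
end

section
/- Let F be a field containing a primitive ab-th root of unity ω, where a,b are positive integers with ab invertible in F. Define the DFT matrices [F_ℓ]_{i,j} = ω_ℓ^{ij} where ω_a = ω^b and ω_b = ω^a, the twiddle matrix D_{a,b} = diag(ω^{⌊i/b⌋·(i mod b)}) for 0 ≤ i < ab, and the perfect-shuffle permutation S_{b,a}. Then the length-ab DFT matrix factors as F_{ab} = S_{b,a}(I_a ⊗ F_b) D_{a,b} (F_a ⊗ I_b). -/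
/-- Cooley–Tukey factorization of the DFT matrix:
`F_{ab} = S_{b,a} (I_a ⊗ F_b) D_{a,b} (F_a ⊗ I_b)`, where all matrices are written on
the index set `Fin (a*b)`.  The input index is `j = j' + b·j''` (`j' < b`, `j'' < a`),
the intermediate index is `i = b·i'' + j'`, and the output index is `i = a·i' + i''`;
`S_{b,a}` deinterleaves by sending `a·i' + i''` to `b·i'' + i'`. -/
theorem cooley_tukey_factorization
    (F : Type*) [Field F] (a b : ℕ) (ha : 0 < a) (hb : 0 < b)
    (ω : F) (hω : IsPrimitiveRoot ω (a * b)) (hunit : IsUnit ((a * b : ℕ) : F))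
    (Fab FaIb IaFb D S : Matrix (Fin (a * b)) (Fin (a * b)) F)
    (hFab : ∀ i j, Fab i j = ω ^ ((i : ℕ) * (j : ℕ)))
    (hFaIb : ∀ i j, FaIb i j =
      if (i : ℕ) % b = (j : ℕ) % b then (ω ^ b) ^ (((i : ℕ) / b) * ((j : ℕ) / b)) else 0)
    (hIaFb : ∀ i j, IaFb i j =
      if (i : ℕ) / b = (j : ℕ) / b then (ω ^ a) ^ (((i : ℕ) % b) * ((j : ℕ) % b)) else 0)
    (hD : ∀ i j, D i j =
      if i = j then ω ^ (((i : ℕ) / b) * ((i : ℕ) % b)) else 0)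
    (hS : ∀ i j, S i j =
      if (j : ℕ) = b * ((i : ℕ) % a) + (i : ℕ) / a then 1 else 0) :
    Fab = S * IaFb * D * FaIb := by
  have hab : 0 < a * b := Nat.mul_pos ha hb
  ext i j
  have hiab : (i : ℕ) < a * b := i.isLt
  have hqi : (i : ℕ) / a < b := Nat.div_lt_of_lt_mul hiab
  have hri : (i : ℕ) % a < a := Nat.mod_lt _ ha
  have hrj : (j : ℕ) % b < b := Nat.mod_lt _ hb
  have hmod : ∀ x c : ℕ, c < b → (b * x + c) % b = c := fun x c hc => by
    rw [Nat.mul_add_mod, Nat.mod_eq_of_lt hc]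
  have hdiv : ∀ x c : ℕ, c < b → (b * x + c) / b = x := fun x c hc => by
    rw [Nat.mul_add_div hb, Nat.div_eq_of_lt hc, Nat.add_zero]
  have hbound : ∀ c : ℕ, c < b → b * ((i : ℕ) % a) + c < a * b := fun c hc => by
    calc b * ((i : ℕ) % a) + c < b * ((i : ℕ) % a) + b := by omega
      _ = b * ((i : ℕ) % a + 1) := by ring
      _ ≤ b * a := Nat.mul_le_mul_left _ (by omega)
      _ = a * b := Nat.mul_comm _ _
  set k0 : Fin (a * b) := ⟨b * ((i : ℕ) % a) + (i : ℕ) / a, hbound _ hqi⟩ with hk0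
  set l0 : Fin (a * b) := ⟨b * ((i : ℕ) % a) + (j : ℕ) % b, hbound _ hrj⟩ with hl0
  have hk0b : (k0 : ℕ) % b = (i : ℕ) / a := hmod _ _ hqi
  have hk0d : (k0 : ℕ) / b = (i : ℕ) % a := hdiv _ _ hqi
  have hl0b : (l0 : ℕ) % b = (j : ℕ) % b := hmod _ _ hrj
  have hl0d : (l0 : ℕ) / b = (i : ℕ) % a := hdiv _ _ hrj
  have hDF : ∀ l : Fin (a * b), (D * FaIb) l j
      = ω ^ (((l : ℕ) / b) * ((l : ℕ) % b)) * FaIb l j := by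
    intro l
    rw [Matrix.mul_apply, Finset.sum_eq_single l]
    · rw [hD, if_pos rfl]
    · intro m _ hm
      rw [hD, if_neg (fun h => hm h.symm), zero_mul]
    · simp
  rw [Matrix.mul_assoc, Matrix.mul_assoc, Matrix.mul_apply, Finset.sum_eq_single k0]
  · rw [hS, if_pos rfl, one_mul, Matrix.mul_apply, Finset.sum_eq_single l0]
    · rw [hDF, hIaFb, hFaIb, hFab, if_pos (by rw [hk0d, hl0d]), if_pos hl0b,
        hk0b, hl0b, hl0d]
      set q := (i : ℕ) / a with hq
      set r := (i : ℕ) % a with hr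
      set q' := (j : ℕ) / b with hq'
      set r' := (j : ℕ) % b with hr'
      have h1 : a * q + r = (i : ℕ) := Nat.div_add_mod _ _
      have h2 : b * q' + r' = (j : ℕ) := Nat.div_add_mod _ _
      have hij : (i : ℕ) * (j : ℕ)
          = a * b * (q * q') + (a * (q * r') + (r * r' + b * (r * q'))) := by
        rw [← h1, ← h2]; ring
      rw [← pow_mul, ← pow_mul, ← pow_add, ← pow_add]
      conv_lhs => rw [hij]
      rw [pow_add, pow_mul, hω.pow_eq_one, one_pow, one_mul]
    · intro l _ hl
      rcases eq_or_ne ((l : ℕ) / b) ((k0 : ℕ) / b) with hdv | hdv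
      · rcases eq_or_ne ((l : ℕ) % b) ((j : ℕ) % b) with hm | hm
        · exfalso
          apply hl
          apply Fin.ext
          have := Nat.div_add_mod (l : ℕ) b
          rw [hdv, hk0d] at this
          show (l : ℕ) = b * ((i : ℕ) % a) + (j : ℕ) % b
          rw [← hm]
          exact this.symm
        · rw [hDF, hFaIb, if_neg hm, mul_zero, mul_zero]
      · rw [hIaFb, if_neg (fun h => hdv h.symm), zero_mul]
    · simp
  · intro k _ hk
    rw [hS, if_neg, zero_mul]
    intro h
    exact hk (Fin.ext h)
  · simp
end

section
/- In a bipartite graph with variable nodes of degree d_v ≥ 2 and girth at least 6, every nonempty stopping set has size at least d_v + 1. -/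
open Finset

/-- In a bipartite (Tanner) graph with variable nodes of degree `d_v ≥ 2` and girth at
least 6 (no two distinct variable nodes share two common check neighbors), every
nonempty stopping set has size at least `d_v + 1`. -/
theorem girth_six_min_stopping_set
    {V C : Type*} [DecidableEq V] [DecidableEq C]
    (E : V → Finset C) (dv : ℕ) (hdv : 2 ≤ dv)
    (hdeg : ∀ v, (E v).card = dv)
    (hgirth : ∀ v v' : V, v ≠ v' → (E v ∩ E v').card ≤ 1)
    (A : Finset V) (hA : A.Nonempty)
    (hstop : ∀ c : C, (∃ v ∈ A, c ∈ E v) →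
      2 ≤ (A.filter (fun v => c ∈ E v)).card) :
    dv + 1 ≤ A.card := by
  obtain ⟨v, hv⟩ := hA
  have key : ∀ c : C, ∃ w, c ∈ E v → (w ∈ A.erase v ∧ c ∈ E w) := by
    intro c
    by_cases hc : c ∈ E v
    · have h2 := hstop c ⟨v, hv, hc⟩
      have hex : ∃ w ∈ A.filter (fun v => c ∈ E v), w ≠ v := by
        by_contra h
        push_neg at h
        have hsub : A.filter (fun v => c ∈ E v) ⊆ {v} := fun x hx =>
          mem_singleton.2 (h x hx)
        have := card_le_card hsub
        simp at this
        omega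
      obtain ⟨w, hw, hwv⟩ := hex
      simp only [mem_filter] at hw
      exact ⟨w, fun _ => ⟨mem_erase.2 ⟨hwv, hw.1⟩, hw.2⟩⟩
    · exact ⟨v, fun h => absurd h hc⟩
  choose f hf using key
  have hinj : Set.InjOn f (E v) := by
    intro c hc c' hc' heq
    by_contra hne
    have h1 := hf c hc
    have h2 := hf c' hc'
    have hwv : f c ≠ v := (mem_erase.1 h1.1).1
    have hle := hgirth v (f c) (Ne.symm hwv)
    have hsub : ({c, c'} : Finset C) ⊆ E v ∩ E (f c) := by
      intro x hx
      rcases mem_insert.1 hx with rfl | hx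
      · exact mem_inter.2 ⟨hc, h1.2⟩
      · rw [mem_singleton.1 hx]
        exact mem_inter.2 ⟨hc', heq ▸ h2.2⟩
    have hcard : ({c, c'} : Finset C).card = 2 := card_pair hne
    have := card_le_card hsub
    omega
  have hmaps : ∀ c ∈ E v, f c ∈ A.erase v := fun c hc => (hf c hc).1
  have hle : (E v).card ≤ (A.erase v).card :=
    card_le_card_of_injOn f hmaps hinj
  rw [hdeg, card_erase_of_mem hv] at hle
  have : 1 ≤ A.card := card_pos.2 ⟨v, hv⟩
  omega
end
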